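/- Let μ be a non-atomic shift-invariant Markov measure on X^ℕ and g : X^ℕ → X^ℕ a tree endomorphism of subexponential activity growth. Then the pushforward measure g_*μ is absolutely continuous with respect to μ if and only if μ(wxX^ℕ) = 0 implies μ(g^{-1}(wxX^ℕ)) = 0 for all w ∈ V_max(g) and x ∈ X. In that case the Radon–Nikodym derivative is d(g_*μ)/dμ = Σ_{w ∈ V_max(g), x ∈ X, μ(wxX^ℕ) ≠ 0} [μ(g^{-1}(wxX^ℕ))/μ(wxX^ℕ)] · χ_{wxX^ℕ}. -/

import Mathlib

open MeasureTheory Filter Topology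
open scoped ENNReal

namespace AutoMarkov

variable {X : Type*} {S : Type*}

/-- The cylinder set of sequences starting with the finite word `w`. -/
def cylinder (w : List X) : Set (ℕ → X) :=
  {ω | ∀ i : Fin w.length, ω i = w.get i}

/-- Product of transition probabilities `L x y₁ * L y₁ y₂ * ⋯` along a word. -/
noncomputable def chainWeight (L : X → X → ℝ≥0∞) : X → List X → ℝ≥0∞
  | _, [] => 1
  | x, y :: v => L x y * chainWeight L y v

/-- The Markov weight `l_{x₁} L_{x₁x₂} ⋯ L_{x_{n-1}x_n}` of a finite word. -/
noncomputable def cylWeight (l : X → ℝ≥0∞) (L : X → X → ℝ≥0∞) : List X → ℝ≥0∞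
  | [] => 1
  | x :: v => l x * chainWeight L x v

/-- The one-sided shift on sequences. -/
def shift : (ℕ → X) → ℕ → X := fun ω n => ω (n + 1)

/-- A tree endomorphism: preserves word length and the prefix relation. -/
def IsTreeEndo (g : List X → List X) : Prop :=
  (∀ w, (g w).length = w.length) ∧ ∀ u w : List X, u <+: w → g u <+: g w

/-- Restriction (section) of `g` by the word `u`: the unique map with
`g (u ++ w) = g u ++ restrict g u w`. -/
def restrict (g : List X → List X) (u : List X) : List X → List X :=
  fun w => (g (u ++ w)).drop u.length

/-- `activity g n` is the number of words of length `n` with nontrivial restriction. -/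
noncomputable def activity (g : List X → List X) (n : ℕ) : ℕ :=
  Set.ncard {w : List X | w.length = n ∧ restrict g w ≠ id}

/-- `g` is finite-state if it has only finitely many distinct restrictions. -/
def FiniteState (g : List X → List X) : Prop :=
  (Set.range fun u => restrict g u).Finite

/-- Polynomial activity growth: `R_g(n) ≤ c n^α` for some `c, α > 0`. -/
def PolyActivity (g : List X → List X) : Prop :=
  ∃ c α : ℝ, 0 < c ∧ 0 < α ∧ ∀ n : ℕ, 1 ≤ n → (activity g n : ℝ) ≤ c * (n : ℝ) ^ α

/-- Subexponential activity growth: for every `c > 1`, `R_g(n) ≤ c^n` eventually. -/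
def SubexpActivity (g : List X → List X) : Prop :=
  ∀ c : ℝ, 1 < c → ∀ᶠ n : ℕ in atTop, (activity g n : ℝ) ≤ c ^ n

/-- The boundary map on infinite sequences induced by a tree endomorphism. -/
def treeBoundary (g : List X → List X) : (ℕ → X) → ℕ → X :=
  fun ω n => (g (List.ofFn fun i : Fin (n + 1) => ω i)).getD n (ω n)

/-- `V(g)`: words `w` such that `g|_u` is trivial for every `u` with `g u = w`. -/
def Vset (g : List X → List X) : Set (List X) :=
  {w | ∀ u, g u = w → restrict g u = id}

/-- `V_max(g)`: elements of `V(g)` having no proper prefix in `V(g)`. -/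
def Vmax (g : List X → List X) : Set (List X) :=
  {w ∈ Vset g | ∀ v ∈ Vset g, v <+: w → v = w}

/-- `Ω_g = X^ℕ \ ⋃_{w ∈ V_max(g)} w X^ℕ`. -/
def OmegaSet (g : List X → List X) : Set (ℕ → X) :=
  (⋃ w ∈ Vmax g, cylinder w)ᶜ

/-- The candidate Radon–Nikodym derivative of `g_*μ` with respect to `μ`:
`Σ_{w ∈ V_max(g), x ∈ X, μ(wxX^ℕ) ≠ 0} [μ(g⁻¹(wxX^ℕ))/μ(wxX^ℕ)] · χ_{wxX^ℕ}`,
where `gb` is the boundary map of the tree endomorphism `g`. -/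
noncomputable def rnDensity [MeasurableSpace X] (μ : Measure (ℕ → X)) (gb : (ℕ → X) → ℕ → X)
    (g : List X → List X) : (ℕ → X) → ℝ≥0∞ :=
  fun ω => ∑' w : List X, ∑' x : X,
    Set.indicator
      {ω' : ℕ → X | w ∈ Vmax g ∧ μ (cylinder (w ++ [x])) ≠ 0 ∧ ω' ∈ cylinder (w ++ [x])}
      (fun _ => μ (gb ⁻¹' cylinder (w ++ [x])) / μ (cylinder (w ++ [x]))) ω

/-! ### Auxiliary: prefixes of sequences -/

/-- The length-`n` prefix of a sequence, as a list. -/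
def pre (ω : ℕ → X) (n : ℕ) : List X := List.ofFn (fun i : Fin n => ω i)

@[simp] lemma pre_length (ω : ℕ → X) (n : ℕ) : (pre ω n).length = n := by
  simp [pre]

lemma pre_getElem (ω : ℕ → X) {n i : ℕ} (h : i < (pre ω n).length) :
    (pre ω n)[i] = ω i := by
  simp [pre]

lemma pre_succ (ω : ℕ → X) (n : ℕ) : pre ω (n + 1) = pre ω n ++ [ω n] := by
  rw [pre, List.ofFn_succ', List.concat_eq_append]
  rfl

lemma pre_prefix (ω : ℕ → X) {m n : ℕ} (h : m ≤ n) : pre ω m <+: pre ω n := by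
  induction n with
  | zero => simp_all
  | succ k ih =>
    rcases Nat.lt_or_ge m (k+1) with h' | h'
    · exact (ih (by omega)).trans (by rw [pre_succ]; exact ⟨[ω k], rfl⟩)
    · have : m = k + 1 := by omega
      subst this; rfl

lemma pre_take (ω : ℕ → X) {m n : ℕ} (h : m ≤ n) : (pre ω n).take m = pre ω m := by
  have h1 := pre_prefix ω h
  rw [List.prefix_iff_eq_take] at h1
  rw [pre_length] at h1
  exact h1.symm

lemma mem_cylinder_iff {ω : ℕ → X} {w : List X} : ω ∈ cylinder w ↔ pre ω w.length = w := by
  constructor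
  · intro h
    apply List.ext_get (by simp)
    intro i h1 h2
    simpa [pre] using (h ⟨i, by simpa using h1⟩)
  · intro h i
    have h2 : (pre ω w.length)[(i : ℕ)]'(by simpa using i.isLt) = ω i := pre_getElem ω _
    rw [List.get_eq_getElem]
    rw [← h2]
    exact List.getElem_of_eq h _

lemma mem_cylinder_pre (ω : ℕ → X) (n : ℕ) : ω ∈ cylinder (pre ω n) := by
  rw [mem_cylinder_iff, pre_length]

lemma cylinder_subset_of_prefix {u v : List X} (h : u <+: v) :
    cylinder v ⊆ cylinder u := by
  intro ω hω
  rw [mem_cylinder_iff] at hω ⊢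
  have hl : u.length ≤ v.length := h.length_le
  rw [List.prefix_iff_eq_take] at h
  rw [h, ← hω, pre_take ω hl, pre_length]

lemma cylinder_inter_of_prefix {u v : List X} (h : u <+: v) :
    cylinder u ∩ cylinder v = cylinder v :=
  Set.inter_eq_self_of_subset_right (cylinder_subset_of_prefix h)

lemma prefix_or_disjoint (u v : List X) :
    u <+: v ∨ v <+: u ∨ Disjoint (cylinder u) (cylinder v) := by
  by_cases h1 : u <+: v
  · exact Or.inl h1
  by_cases h2 : v <+: u
  · exact Or.inr (Or.inl h2)
  refine Or.inr (Or.inr (Set.disjoint_left.2 fun ω hu hv => ?_))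
  rw [mem_cylinder_iff] at hu hv
  rcases Nat.le_total u.length v.length with h | h
  · exact h1 (by rw [← hu, ← hv]; exact (pre_take ω h ▸ (List.take_prefix _ _)))
  · exact h2 (by rw [← hu, ← hv]; exact (pre_take ω h ▸ (List.take_prefix _ _)))

lemma disjoint_cylinder_of_ne {u v : List X} (hlen : u.length = v.length) (hne : u ≠ v) :
    Disjoint (cylinder u) (cylinder v) := by
  rcases prefix_or_disjoint u v with h | h | h
  · exact absurd (h.eq_of_length hlen) hne
  · exact absurd (h.eq_of_length hlen.symm) (Ne.symm hne)
  · exact h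

@[simp] lemma cylinder_nil : cylinder ([] : List X) = Set.univ := by
  ext ω; simp [cylinder]

lemma measurableSet_cylinder [MeasurableSpace X] [MeasurableSingletonClass X] (w : List X) :
    MeasurableSet (cylinder w) := by
  have : cylinder w = ⋂ i : Fin w.length, (fun ω : ℕ → X => ω i) ⁻¹' {w.get i} := by
    ext ω; simp [cylinder, Set.mem_iInter]
  rw [this]
  exact MeasurableSet.iInter fun i =>
    (measurable_pi_apply (i : ℕ)) (measurableSet_singleton _)

/-! ### Finsets of words -/

/-- All words of length `n` as a finset. -/
noncomputable def words [Fintype X] (n : ℕ) : Finset (List X) :=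
  @Finset.image _ _ (Classical.decEq _) List.ofFn (Finset.univ : Finset (Fin n → X))

lemma mem_words [Fintype X] {n : ℕ} {w : List X} : w ∈ words (X := X) n ↔ w.length = n := by
  letI := Classical.decEq (List X)
  unfold words
  rw [Finset.mem_image]
  constructor
  · rintro ⟨f, -, rfl⟩
    simp
  · rintro rfl
    exact ⟨w.get, Finset.mem_univ _, List.ofFn_get w⟩

lemma finite_words (n : ℕ) [Fintype X] : {w : List X | w.length = n}.Finite := by
  have : {w : List X | w.length = n} = ↑(words (X := X) n) := by
    ext w; simp [mem_words]
  rw [this]; exact Finset.finite_toSet _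

/-! ### Weights -/

lemma L_le_one {L : X → X → ℝ≥0∞} [Fintype X] (hL : ∀ x, ∑ y : X, L x y = 1) (x y : X) :
    L x y ≤ 1 := by
  rw [← hL x]
  exact Finset.single_le_sum (fun _ _ => zero_le) (Finset.mem_univ y)

lemma chainWeight_le_one {L : X → X → ℝ≥0∞} [Fintype X] (hL : ∀ x, ∑ y : X, L x y = 1)
    (x : X) (v : List X) : chainWeight L x v ≤ 1 := by
  induction v generalizing x with
  | nil => simp [chainWeight]
  | cons y t ih =>
    calc chainWeight L x (y :: t) = L x y * chainWeight L y t := rfl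
    _ ≤ 1 * 1 := mul_le_mul' (L_le_one hL x y) (ih y)
    _ = 1 := one_mul 1

lemma cylWeight_le_one {l : X → ℝ≥0∞} {L : X → X → ℝ≥0∞} [Fintype X]
    (hL : ∀ x, ∑ y : X, L x y = 1) (hl1 : ∑ x : X, l x = 1) (w : List X) :
    cylWeight l L w ≤ 1 := by
  cases w with
  | nil => simp [cylWeight]
  | cons x t =>
    calc cylWeight l L (x :: t) = l x * chainWeight L x t := rfl
    _ ≤ 1 * 1 := mul_le_mul' (by rw [← hl1]; exact Finset.single_le_sum (fun _ _ => zero_le) (Finset.mem_univ x)) (chainWeight_le_one hL x t)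
    _ = 1 := one_mul 1

lemma chainWeight_append (L : X → X → ℝ≥0∞) (x : X) (u v : List X) :
    chainWeight L x (u ++ v) = chainWeight L x u * chainWeight L (u.getLastD x) v := by
  induction u generalizing x with
  | nil => simp [chainWeight]
  | cons a t ih =>
    simp only [List.cons_append, chainWeight, List.getLastD_cons, mul_assoc, List.append_eq]
    rw [ih a]

lemma cylWeight_concat_append (l : X → ℝ≥0∞) (L : X → X → ℝ≥0∞) (w : List X) (x : X)
    (v : List X) :
    cylWeight l L (w ++ [x] ++ v) = cylWeight l L (w ++ [x]) * chainWeight L x v := by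
  cases w with
  | nil => simp [cylWeight, chainWeight, mul_assoc]
  | cons a t =>
    have h1 : (a :: t) ++ [x] ++ v = a :: (t ++ [x] ++ v) := by simp
    rw [h1]
    show l a * chainWeight L a (t ++ [x] ++ v) = cylWeight l L (a :: (t ++ [x])) * chainWeight L x v
    show _ = l a * chainWeight L a (t ++ [x]) * chainWeight L x v
    rw [chainWeight_append L a (t ++ [x]) v, List.getLastD_concat, mul_assoc]

/-! ### The boundary map and restrictions -/

lemma treeBoundary_pre {g : List X → List X} (hg : IsTreeEndo g) (ω : ℕ → X) (n : ℕ) :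
    pre (treeBoundary g ω) n = g (pre ω n) := by
  apply List.ext_getElem (by simp [hg.1])
  intro i h1 h2
  rw [pre_getElem]
  have hl : (g (pre ω (i + 1))).length = i + 1 := by rw [hg.1, pre_length]
  have h3 : i < (g (pre ω (i+1))).length := by omega
  show (g (pre ω (i + 1))).getD i (ω i) = (g (pre ω n))[i]
  rw [List.getD_eq_getElem _ _ h3]
  have hpre : g (pre ω (i+1)) <+: g (pre ω n) := hg.2 _ _ (pre_prefix ω (by simpa using h1))
  exact hpre.getElem h3

lemma preimage_cylinder {g : List X → List X} (hg : IsTreeEndo g) (w : List X) :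
    treeBoundary g ⁻¹' cylinder w = {ω | g (pre ω w.length) = w} := by
  ext ω
  simp only [Set.mem_preimage, Set.mem_setOf_eq, mem_cylinder_iff,
    treeBoundary_pre hg ω w.length]

lemma restrict_id_append {g : List X → List X} (hg : IsTreeEndo g) {u : List X}
    (h : restrict g u = id) (v : List X) : g (u ++ v) = g u ++ v := by
  have h1 : (g (u ++ v)).drop u.length = v := by
    have := congrFun h v; simpa [restrict] using this
  have h2 : g u <+: g (u ++ v) := hg.2 _ _ ⟨v, rfl⟩
  have h3 : (g (u ++ v)).take u.length = g u := by
    rw [List.prefix_iff_eq_take] at h2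
    rw [hg.1] at h2
    exact h2.symm
  conv_lhs => rw [← List.take_append_drop u.length (g (u ++ v))]
  rw [h1, h3]

lemma restrict_append_id {g : List X → List X} (hg : IsTreeEndo g) {u : List X}
    (h : restrict g u = id) (v : List X) : restrict g (u ++ v) = id := by
  funext t
  simp only [restrict, List.append_assoc, id_eq]
  rw [restrict_id_append hg h (v ++ t)]
  have h4 : g u ++ (v ++ t) = (g u ++ v) ++ t := (List.append_assoc _ _ _).symm
  rw [h4]
  have h5 : (u ++ v).length = (g u ++ v).length := by simp [hg.1]
  rw [h5, List.drop_left]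

/-! ### `Vset` and `Vmax` -/

lemma exists_vmax_prefix {g : List X → List X} {ω : ℕ → X}
    (h : ∃ n, pre ω n ∈ Vset g) : ∃ m, pre ω m ∈ Vmax g := by
  classical
  let m := Nat.find h
  refine ⟨m, Nat.find_spec h, fun v hv hpre => ?_⟩
  have hvlen : v.length ≤ m := by
    have := hpre.length_le; simpa using this
  rw [List.prefix_iff_eq_take] at hpre
  have hveq : v = pre ω v.length := hpre.trans (pre_take ω hvlen)
  have : m ≤ v.length := Nat.find_le (by rw [← hveq]; exact hv)
  have hlm : v.length = m := le_antisymm hvlen this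
  rw [hlm] at hveq
  exact hveq

lemma mem_omega_iff {g : List X → List X} {ω : ℕ → X} :
    ω ∈ OmegaSet g ↔ ∀ n, pre ω n ∉ Vset g := by
  constructor
  · intro h n hn
    obtain ⟨m, hm⟩ := exists_vmax_prefix ⟨n, hn⟩
    exact h (Set.mem_biUnion hm (mem_cylinder_pre ω m))
  · intro h hmem
    simp only [OmegaSet, Set.mem_compl_iff, Set.mem_iUnion, not_not] at hmem
    obtain ⟨w, hw, hmemw⟩ := hmem
    rw [mem_cylinder_iff] at hmemw
    exact h w.length (hmemw.symm ▸ hw.1)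

lemma vmax_disjoint {g : List X → List X} {w w' : List X} (h : w ∈ Vmax g) (h' : w' ∈ Vmax g)
    (hne : w ≠ w') : Disjoint (cylinder w) (cylinder w') := by
  rcases prefix_or_disjoint w w' with hp | hp | hp
  · exact absurd (h'.2 w h.1 hp) hne
  · exact absurd (h.2 w' h'.1 hp).symm hne
  · exact hp

lemma measurableSet_omega [Fintype X] [MeasurableSpace X] [MeasurableSingletonClass X]
    (g : List X → List X) : MeasurableSet (OmegaSet g) := by
  apply MeasurableSet.compl
  exact MeasurableSet.biUnion (Set.to_countable _) fun w _ => measurableSet_cylinder w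

/-! ### Preimage finsets and measures -/

/-- The words of length `w.length` mapping to `w` under `g`. -/
noncomputable def preims [Fintype X] (g : List X → List X) (w : List X) : Finset (List X) :=
  @Finset.filter _ (fun u => g u = w) (Classical.decPred _) (words w.length)

lemma mem_preims [Fintype X] {g : List X → List X} (hg : IsTreeEndo g) {w u : List X} :
    u ∈ preims g w ↔ g u = w := by
  unfold preims
  simp only [Finset.mem_filter, mem_words]
  constructor
  · exact fun h => h.2
  · intro h
    refine ⟨?_, h⟩
    have := hg.1 u
    rw [h] at this
    omega

lemma measure_preimage_cylinder [Fintype X] [MeasurableSpace X] [MeasurableSingletonClass X]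
    {g : List X → List X} (hg : IsTreeEndo g) {l : X → ℝ≥0∞} {L : X → X → ℝ≥0∞}
    {μ : Measure (ℕ → X)} (hμ : ∀ w : List X, μ (cylinder w) = cylWeight l L w) (w : List X) :
    μ (treeBoundary g ⁻¹' cylinder w) = ∑ u ∈ preims g w, cylWeight l L u := by
  have hset : treeBoundary g ⁻¹' cylinder w = ⋃ u ∈ preims g w, cylinder u := by
    rw [preimage_cylinder hg]
    ext ω
    simp only [Set.mem_setOf_eq, Set.mem_iUnion]
    constructor
    · intro h
      exact ⟨pre ω w.length, (mem_preims hg).2 h, mem_cylinder_pre ω _⟩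
    · rintro ⟨u, hu, hmem⟩
      rw [mem_cylinder_iff] at hmem
      have hlen : u.length = w.length := by
        have := hg.1 u; rw [(mem_preims hg).1 hu] at this; omega
      rw [← hlen, hmem, (mem_preims hg).1 hu]
  rw [hset, measure_biUnion_finset ?hd fun u _ => measurableSet_cylinder u]
  · exact Finset.sum_congr rfl fun u _ => hμ u
  case hd =>
    intro u hu u' hu' hne
    have h1 : u.length = w.length := by
      have := hg.1 u; rw [(mem_preims hg).1 hu] at this; omega
    have h2 : u'.length = w.length := by
      have := hg.1 u'; rw [(mem_preims hg).1 hu'] at this; omega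
    exact disjoint_cylinder_of_ne (h1.trans h2.symm) hne

lemma preims_concat [Fintype X] {g : List X → List X} (hg : IsTreeEndo g) {w : List X}
    (hw : w ∈ Vset g) (x : X) (v : List X) :
    preims g (w ++ [x] ++ v) = (preims g w).map
      ⟨fun u => u ++ [x] ++ v,
        fun ⦃a b⦄ hab => List.append_cancel_right (List.append_cancel_right hab)⟩ := by
  ext u
  simp only [mem_preims hg, Finset.mem_map, Function.Embedding.coeFn_mk]
  constructor
  · intro h
    set p := u.take w.length with hp
    have hul : u.length = w.length + 1 + v.length := by
      have := hg.1 u; rw [h] at this; simp at this; omega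
    have hplen : p.length = w.length := by
      rw [hp, List.length_take, hul]; omega
    have hgp : g p = w := by
      have hpre : g p <+: g u := hg.2 _ _ (List.take_prefix _ _)
      have hlen : (g p).length = w.length := by rw [hg.1]; exact hplen
      rw [h] at hpre
      have : g p <+: w ++ ([x] ++ v) := by rwa [List.append_assoc] at hpre
      have hw2 : w <+: w ++ ([x] ++ v) := ⟨[x] ++ v, rfl⟩
      exact (List.prefix_of_prefix_length_le this hw2 (by omega)).eq_of_length (by omega)
    have hrid : restrict g p = id := hw p hgp
    have hudrop : g u = g p ++ u.drop w.length := by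
      conv_lhs => rw [← List.take_append_drop w.length u, ← hp]
      rw [restrict_id_append hg hrid]
    have hdrop : u.drop w.length = [x] ++ v := by
      rw [h, hgp] at hudrop
      rw [List.append_assoc] at hudrop
      exact (List.append_cancel_left hudrop.symm)
    refine ⟨p, hgp, ?_⟩
    show p ++ [x] ++ v = u
    rw [List.append_assoc, ← hdrop, hp]
    exact List.take_append_drop _ u
  · rintro ⟨p, hgp, rfl⟩
    have hrid : restrict g p = id := hw p hgp
    show g (p ++ [x] ++ v) = _
    rw [List.append_assoc, restrict_id_append hg hrid, hgp, List.append_assoc]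

/-! ### Decay of cylinder weights -/

/-- Max chain weight over states of positive `l`-measure. -/
noncomputable def Mfun [Fintype X] (l : X → ℝ≥0∞) (L : X → X → ℝ≥0∞) (n : ℕ) : ℝ≥0∞ :=
  (Finset.univ ×ˢ words n).sup fun p =>
    Set.indicator {x : X | l x ≠ 0} (fun x => chainWeight L x p.2) p.1

section decay
variable [Fintype X] {l : X → ℝ≥0∞} {L : X → X → ℝ≥0∞}

lemma le_Mfun {x : X} (hx : l x ≠ 0) {v : List X} {n : ℕ} (hv : v.length = n) :
    chainWeight L x v ≤ Mfun l L n := by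
  have hmem : (x, v) ∈ (Finset.univ : Finset X) ×ˢ words (X := X) n := by
    rw [Finset.mem_product]
    exact ⟨Finset.mem_univ _, mem_words.2 hv⟩
  have h2 : Set.indicator {x : X | l x ≠ 0} (fun x => chainWeight L x v) x ≤ Mfun l L n :=
    Finset.le_sup (f := fun p : X × List X =>
      Set.indicator {x : X | l x ≠ 0} (fun x => chainWeight L x p.2) p.1) hmem
  rwa [Set.indicator_of_mem (show _ ∈ {x : X | l x ≠ 0} from hx)] at h2

lemma Mfun_le_one (hL : ∀ x, ∑ y : X, L x y = 1) (n : ℕ) : Mfun l L n ≤ 1 := by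
  apply Finset.sup_le
  rintro ⟨x, v⟩ -
  by_cases hx : l x ≠ 0
  · rw [Set.indicator_of_mem (show _ ∈ {x : X | l x ≠ 0} from hx)]; exact chainWeight_le_one hL x v
  · rw [Set.indicator_of_notMem (show ¬ _ ∈ {x : X | l x ≠ 0} from hx)]; exact zero_le_one

lemma l_ne_zero_chain (hstat : ∀ y, ∑ x : X, l x * L x y = l y) {x : X} (hx : l x ≠ 0)
    {v : List X} (hv : chainWeight L x v ≠ 0) : l (v.getLastD x) ≠ 0 := by
  induction v generalizing x with
  | nil => simpa using hx
  | cons y t ih =>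
    have h1 : L x y * chainWeight L y t ≠ 0 := hv
    have hy : l y ≠ 0 := by
      intro h0
      have hle : l x * L x y ≤ l y := by
        rw [← hstat y]
        exact Finset.single_le_sum (f := fun x' => l x' * L x' y) (fun _ _ => zero_le)
          (Finset.mem_univ x)
      rw [h0, nonpos_iff_eq_zero, mul_eq_zero] at hle
      rcases hle with h | h
      · exact hx h
      · rw [h, zero_mul] at h1; exact h1 rfl
    rw [List.getLastD_cons]
    exact ih hy (fun h0 => h1 (by rw [mul_eq_zero]; exact Or.inr h0))

lemma Mfun_mul (hL : ∀ x, ∑ y : X, L x y = 1) (hstat : ∀ y, ∑ x : X, l x * L x y = l y)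
    (a b : ℕ) : Mfun l L (a + b) ≤ Mfun l L a * Mfun l L b := by
  apply Finset.sup_le
  rintro ⟨x, v⟩ hmem
  rw [Finset.mem_product, mem_words] at hmem
  have hvl : v.length = a + b := hmem.2
  by_cases hx : l x ≠ 0
  · rw [Set.indicator_of_mem (show _ ∈ {x : X | l x ≠ 0} from hx)]
    conv_lhs => rw [← List.take_append_drop a v, chainWeight_append]
    by_cases h0 : chainWeight L x (v.take a) = 0
    · rw [h0, zero_mul]; exact zero_le
    · refine mul_le_mul' (le_Mfun hx (by rw [List.length_take]; omega))
        (le_Mfun (l_ne_zero_chain hstat hx h0) (by rw [List.length_drop]; omega))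
  · rw [Set.indicator_of_notMem (show ¬ _ ∈ {x : X | l x ≠ 0} from hx)]; exact zero_le

lemma Mfun_pow (hL : ∀ x, ∑ y : X, L x y = 1) (hstat : ∀ y, ∑ x : X, l x * L x y = l y)
    (K q : ℕ) : Mfun l L (K * q) ≤ Mfun l L K ^ q := by
  induction q with
  | zero => simpa using Mfun_le_one hL 0
  | succ q ih =>
    calc Mfun l L (K * (q + 1)) = Mfun l L (K * q + K) := by ring_nf
    _ ≤ Mfun l L (K * q) * Mfun l L K := Mfun_mul hL hstat _ _
    _ ≤ Mfun l L K ^ q * Mfun l L K := mul_le_mul_left ih _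
    _ = Mfun l L K ^ (q + 1) := (pow_succ _ _).symm

lemma Mfun_anti (hL : ∀ x, ∑ y : X, L x y = 1) (hstat : ∀ y, ∑ x : X, l x * L x y = l y)
    {a b : ℕ} (h : a ≤ b) : Mfun l L b ≤ Mfun l L a := by
  calc Mfun l L b = Mfun l L (a + (b - a)) := by rw [Nat.add_sub_cancel' h]
  _ ≤ Mfun l L a * Mfun l L (b - a) := Mfun_mul hL hstat _ _
  _ ≤ Mfun l L a * 1 := mul_le_mul_right (Mfun_le_one hL _) _
  _ = Mfun l L a := mul_one _

lemma cylWeight_le_Mfun (hl1 : ∑ x : X, l x = 1) {w : List X} {n : ℕ}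
    (h : w.length = n + 1) : cylWeight l L w ≤ Mfun l L n := by
  cases w with
  | nil => simp at h
  | cons x t =>
    by_cases hx : l x ≠ 0
    · calc cylWeight l L (x :: t) = l x * chainWeight L x t := rfl
      _ ≤ 1 * Mfun l L n := mul_le_mul'
          (by rw [← hl1]; exact Finset.single_le_sum (fun _ _ => zero_le) (Finset.mem_univ x))
          (le_Mfun hx (by simpa using h))
      _ = Mfun l L n := one_mul _
    · push_neg at hx
      show l x * chainWeight L x t ≤ _
      rw [hx, zero_mul]
      exact zero_le

lemma one_of_mul_one {a b : ℝ≥0∞} (hab : a * b = 1) (ha : a ≤ 1) (hb : b ≤ 1) : a = 1 := by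
  have h1 : (1 : ℝ≥0∞) ≤ a := by
    calc (1 : ℝ≥0∞) = a * b := hab.symm
    _ ≤ a * 1 := mul_le_mul_right hb _
    _ = a := mul_one _
  exact le_antisymm ha h1

lemma exists_Mfun_lt_one [Nonempty X] [MeasurableSpace X] [MeasurableSingletonClass X]
    (hL : ∀ x, ∑ y : X, L x y = 1) (hstat : ∀ y, ∑ x : X, l x * L x y = l y)
    (μ : Measure (ℕ → X)) (hμ : ∀ w : List X, μ (cylinder w) = cylWeight l L w)
    (hna : ∀ ω : ℕ → X, μ {ω} = 0) :
    ∃ K : ℕ, 0 < K ∧ Mfun l L K < 1 := by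
  classical
  by_contra hcon
  push_neg at hcon
  -- For every K there is a positive state with a weight-one chain of length K+1.
  have hone : ∀ K : ℕ, ∃ x : X, ∃ v : List X,
      l x ≠ 0 ∧ v.length = K + 1 ∧ chainWeight L x v = 1 := by
    intro K
    have hne : ((Finset.univ : Finset X) ×ˢ words (X := X) (K + 1)).Nonempty := by
      refine ⟨(Classical.arbitrary X, List.replicate (K + 1) (Classical.arbitrary X)), ?_⟩
      rw [Finset.mem_product]
      exact ⟨Finset.mem_univ _, mem_words.2 (List.length_replicate)⟩
    obtain ⟨p, hp, hsup⟩ := Finset.exists_mem_eq_sup ((Finset.univ : Finset X) ×ˢ words (X := X) (K + 1)) hne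
      (fun p : X × List X => Set.indicator {x : X | l x ≠ 0} (fun x => chainWeight L x p.2) p.1)
    have h1 : Mfun l L (K + 1) = 1 :=
      le_antisymm (Mfun_le_one hL _) (hcon (K + 1) (Nat.succ_pos K))
    rw [Mfun] at h1 -- ?
    rw [hsup] at h1
    rw [Finset.mem_product, mem_words] at hp
    by_cases hx : l p.1 ≠ 0
    · rw [Set.indicator_of_mem (show _ ∈ {x : X | l x ≠ 0} from hx)] at h1
      exact ⟨p.1, p.2, hx, hp.2, h1⟩
    · rw [Set.indicator_of_notMem (show ¬ _ ∈ {x : X | l x ≠ 0} from hx)] at h1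
      exact absurd h1 (by simp)
  -- Pigeonhole: one state works for all lengths.
  set F : ℕ → X := fun K => (hone K).choose with hF
  obtain ⟨x₀, hfib⟩ := Finite.exists_infinite_fiber F
  have hfib' : (F ⁻¹' {x₀}).Infinite := Set.infinite_coe_iff.1 hfib
  -- the "all lengths" predicate
  set S : X → Prop := fun x => l x ≠ 0 ∧
    ∀ K : ℕ, ∃ v : List X, v.length = K ∧ chainWeight L x v = 1 with hS
  have hS₀ : S x₀ := by
    obtain ⟨K₀, hK₀⟩ := hfib'.nonempty
    have hspec₀ := (hone K₀).choose_spec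
    rw [Set.mem_preimage, Set.mem_singleton_iff] at hK₀
    have hch₀ : (hone K₀).choose = x₀ := hK₀
    constructor
    · obtain ⟨v, hv1, -⟩ := hspec₀
      rw [hch₀] at hv1; exact hv1
    · intro K
      obtain ⟨K', hK'mem, hKK'⟩ := hfib'.exists_gt K
      rw [Set.mem_preimage, Set.mem_singleton_iff] at hK'mem
      have hch : (hone K').choose = x₀ := hK'mem
      obtain ⟨v, hv1, hv2, hv3⟩ := (hone K').choose_spec
      rw [hch] at hv1 hv3
      refine ⟨v.take K, by rw [List.length_take]; omega, ?_⟩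
      rw [← List.take_append_drop K v, chainWeight_append] at hv3
      exact one_of_mul_one hv3 (chainWeight_le_one hL _ _) (chainWeight_le_one hL _ _)
  -- the deterministic step
  have hstep : ∀ x : X, S x → ∃ y : X, L x y = 1 ∧ S y := by
    intro x hx
    obtain ⟨v₁, hv₁len, hv₁⟩ := hx.2 1
    obtain ⟨y, rfl⟩ : ∃ y, v₁ = [y] := by
      cases v₁ with
      | nil => simp at hv₁len
      | cons a t =>
        cases t with
        | nil => exact ⟨a, rfl⟩
        | cons b s => simp at hv₁len
    have hLxy : L x y = 1 := by
      have : L x y * chainWeight L y [] = 1 := hv₁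
      simpa [chainWeight] using this
    have hun : ∀ z, L x z = 1 → z = y := by
      intro z hz
      by_contra hne
      have hsub : ({z, y} : Finset X) ⊆ Finset.univ := Finset.subset_univ _
      have hsum : L x z + L x y ≤ ∑ y' : X, L x y' := by
        rw [← Finset.sum_pair hne]
        exact Finset.sum_le_sum_of_subset hsub
      rw [hz, hLxy, hL x] at hsum
      norm_num at hsum
    have hly : l y ≠ 0 := by
      intro h0
      have hle : l x * L x y ≤ l y := by
        rw [← hstat y]
        exact Finset.single_le_sum (f := fun x' => l x' * L x' y) (fun _ _ => zero_le)
          (Finset.mem_univ x)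
      rw [h0, nonpos_iff_eq_zero, hLxy, mul_one] at hle
      exact hx.1 hle
    refine ⟨y, hLxy, hly, fun K => ?_⟩
    obtain ⟨v, hvlen, hv⟩ := hx.2 (K + 1)
    cases v with
    | nil => simp at hvlen
    | cons z t =>
      have hz1 : L x z * chainWeight L z t = 1 := hv
      have hLz : L x z = 1 :=
        one_of_mul_one hz1 (L_le_one hL x z) (chainWeight_le_one hL z t)
      have hchain : chainWeight L z t = 1 :=
        one_of_mul_one (by rw [mul_comm] at hz1; exact hz1) (chainWeight_le_one hL z t)
          (L_le_one hL x z)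
      have := hun z hLz
      subst this
      exact ⟨t, by simpa using hvlen, hchain⟩
  -- build the deterministic infinite path
  let f : ℕ → {x : X // S x} := fun n => Nat.rec ⟨x₀, hS₀⟩
    (fun _ p => ⟨(hstep p.1 p.2).choose, ((hstep p.1 p.2).choose_spec).2⟩) n
  set ω : ℕ → X := fun n => (f n).1 with hω
  have hf : ∀ n : ℕ, L (ω n) (ω (n + 1)) = 1 := by
    intro n
    exact ((hstep (f n).1 (f n).2).choose_spec).1
  have hω0 : ω 0 = x₀ := rfl
  have hcyl : ∀ n : ℕ, cylWeight l L (pre ω (n + 1)) = l x₀ := by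
    intro n
    induction n with
    | zero =>
      have : pre ω 1 = [x₀] := by
        rw [pre_succ]
        simp [pre, hω0]
      rw [this]
      show l x₀ * chainWeight L x₀ [] = l x₀
      simp [chainWeight]
    | succ n ih =>
      have h1 : pre ω (n + 2) = pre ω n ++ [ω n] ++ [ω (n + 1)] := by
        rw [pre_succ, pre_succ]
      rw [h1, cylWeight_concat_append, ← pre_succ, ih]
      show l x₀ * (L (ω n) (ω (n+1)) * chainWeight L (ω (n+1)) []) = l x₀
      rw [hf n]
      simp [chainWeight]
  have hsingle : {ω} = ⋂ n : ℕ, cylinder (pre ω n) := by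
    ext ω'
    simp only [Set.mem_singleton_iff, Set.mem_iInter]
    constructor
    · rintro rfl n
      exact mem_cylinder_pre ω n
    · intro h
      funext i
      have := h (i + 1)
      rw [mem_cylinder_iff, pre_length] at this
      have h2 : (pre ω' (i+1))[i]'(by simp) = (pre ω (i+1))[i]'(by simp) :=
        List.getElem_of_eq this _
      rw [pre_getElem, pre_getElem] at h2
      exact h2
  have htend : Filter.Tendsto (fun n => μ (cylinder (pre ω n))) atTop
      (𝓝 (μ (⋂ n : ℕ, cylinder (pre ω n)))) := by
    have := MeasureTheory.tendsto_measure_iInter_atTop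
      (μ := μ) (s := fun n => cylinder (pre ω n))
      (fun n => (measurableSet_cylinder _).nullMeasurableSet)
      (fun m n hmn => cylinder_subset_of_prefix (pre_prefix ω hmn))
      ⟨0, by rw [hμ]; simp [pre]; exact ENNReal.one_ne_top⟩
    exact this
  have htend2 : Filter.Tendsto (fun n => μ (cylinder (pre ω n))) atTop (𝓝 (l x₀)) := by
    have hev : (fun n => μ (cylinder (pre ω n))) =ᶠ[atTop] fun _ => l x₀ := by
      filter_upwards [Filter.eventually_ge_atTop 1] with n hn
      obtain ⟨m, rfl⟩ : ∃ m, n = m + 1 := ⟨n - 1, by omega⟩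
      rw [hμ, hcyl m]
    rw [Filter.tendsto_congr' hev]
    exact tendsto_const_nhds
  have hμω : μ {ω} = l x₀ := by
    rw [hsingle]
    exact tendsto_nhds_unique htend htend2
  have : l x₀ ≠ 0 := hS₀.1
  rw [hna ω] at hμω
  exact this hμω.symm

lemma exists_decay [Nonempty X] [MeasurableSpace X] [MeasurableSingletonClass X]
    (hL : ∀ x, ∑ y : X, L x y = 1) (hl1 : ∑ x : X, l x = 1)
    (hstat : ∀ y, ∑ x : X, l x * L x y = l y)
    (μ : Measure (ℕ → X)) (hμ : ∀ w : List X, μ (cylinder w) = cylWeight l L w)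
    (hna : ∀ ω : ℕ → X, μ {ω} = 0) :
    ∃ K : ℕ, 0 < K ∧ ∃ θ : ℝ≥0∞, θ < 1 ∧
      ∀ w : List X, cylWeight l L w ≤ θ ^ ((w.length - 1) / K) := by
  obtain ⟨K, hK, hM⟩ := exists_Mfun_lt_one hL hstat μ hμ hna
  refine ⟨K, hK, Mfun l L K, hM, fun w => ?_⟩
  cases w with
  | nil =>
    show (1 : ℝ≥0∞) ≤ _
    simp
  | cons x t =>
    have h1 : (x :: t).length - 1 = t.length := by simp
    rw [h1]
    calc cylWeight l L (x :: t) ≤ Mfun l L t.length := cylWeight_le_Mfun hl1 (by simp)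
    _ ≤ Mfun l L (K * (t.length / K)) :=
        Mfun_anti hL hstat (by rw [mul_comm]; exact Nat.div_mul_le_self _ _)
    _ ≤ Mfun l L K ^ (t.length / K) := Mfun_pow hL hstat _ _

end decay

/-! ### Counting active words -/

section counting
variable [Fintype X]

/-- Active words of length `n`, as a finset. -/
noncomputable def actW (g : List X → List X) (n : ℕ) : Finset (List X) :=
  @Finset.filter _ (fun w => restrict g w ≠ id) (Classical.decPred _) (words n)

lemma mem_actW {g : List X → List X} {n : ℕ} {w : List X} :
    w ∈ actW g n ↔ w.length = n ∧ restrict g w ≠ id := by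
  unfold actW
  simp only [Finset.mem_filter, mem_words]

lemma card_actW (g : List X → List X) (n : ℕ) : (actW g n).card = activity g n := by
  have h : {w : List X | w.length = n ∧ restrict g w ≠ id} = ↑(actW g n) := by
    ext w; simp only [Set.mem_setOf_eq, Finset.mem_coe, mem_actW]
  rw [activity, h, Set.ncard_coe_finset]

/-- Words of length `n` not in `Vset g`. -/
noncomputable def nonV (g : List X → List X) (n : ℕ) : Finset (List X) :=
  @Finset.filter _ (fun w => w ∉ Vset g) (Classical.decPred _) (words n)

lemma mem_nonV {g : List X → List X} {n : ℕ} {w : List X} :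
    w ∈ nonV g n ↔ w.length = n ∧ w ∉ Vset g := by
  unfold nonV
  simp only [Finset.mem_filter, mem_words]

lemma card_nonV {g : List X → List X} (hg : IsTreeEndo g) (n : ℕ) :
    (nonV g n).card ≤ activity g n := by
  classical
  rw [← card_actW]
  have hmap : ∀ w ∈ nonV g n, ∃ u : List X,
      u.length = n ∧ restrict g u ≠ id ∧ g u = w := by
    intro w hw
    rw [mem_nonV] at hw
    have h2 : ¬ ∀ u, g u = w → restrict g u = id := hw.2
    push_neg at h2
    obtain ⟨u, hu1, hu2⟩ := h2
    have : u.length = n := by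
      have := hg.1 u; rw [hu1] at this; omega
    exact ⟨u, this, hu2, hu1⟩
  choose! F hF1 hF2 hF3 using hmap
  apply Finset.card_le_card_of_injOn F
  · intro w hw
    rw [Finset.mem_coe, mem_actW]
    exact ⟨hF1 w hw, hF2 w hw⟩
  · intro w hw w' hw' heq
    rw [← hF3 w hw, ← hF3 w' hw', heq]

/-- Words of length `m+k` with inactive `m`-prefix but image outside `Vset`. -/
noncomputable def Zset (g : List X → List X) (m k : ℕ) : Finset (List X) :=
  @Finset.filter _ (fun z => restrict g (z.take m) = id ∧ g z ∉ Vset g)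
    (Classical.decPred _) (words (m + k))

lemma mem_Zset {g : List X → List X} {m k : ℕ} {z : List X} :
    z ∈ Zset g m k ↔ z.length = m + k ∧ restrict g (z.take m) = id ∧ g z ∉ Vset g := by
  unfold Zset
  simp only [Finset.mem_filter, mem_words, and_assoc]

lemma card_Zset {g : List X → List X} (hg : IsTreeEndo g) (m k : ℕ) :
    (Zset g m k).card ≤ (words (X := X) m).card * activity g (m + k) := by
  classical
  rw [← card_actW, ← Finset.card_product]
  have hmap : ∀ z ∈ Zset g m k, ∃ u : List X,
      u.length = m + k ∧ restrict g u ≠ id ∧ g u = g z := by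
    intro z hz
    rw [mem_Zset] at hz
    have h2 : ¬ ∀ u, g u = g z → restrict g u = id := hz.2.2
    push_neg at h2
    obtain ⟨u, hu1, hu2⟩ := h2
    have : u.length = m + k := by
      have h3 := hg.1 u; have h4 := hg.1 z; rw [hu1] at h3; omega
    exact ⟨u, this, hu2, hu1⟩
  choose! F hF1 hF2 hF3 using hmap
  apply Finset.card_le_card_of_injOn (fun z => (z.take m, F z))
  · intro z hz
    rw [Finset.mem_coe]; beta_reduce; rw [Finset.mem_product, mem_words]
    have hlen := (mem_Zset.1 hz).1
    constructor
    · rw [List.length_take]; omega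
    · rw [mem_actW]; exact ⟨hF1 z hz, hF2 z hz⟩
  · intro z hz z' hz' heq
    simp only [Prod.mk.injEq] at heq
    have hgz : g z = g z' := by
      rw [← hF3 z hz, ← hF3 z' hz', heq.2]
    have hexp : ∀ y ∈ Zset g m k, g y = g (y.take m) ++ y.drop m := by
      intro y hy
      conv_lhs => rw [← List.take_append_drop m y]
      rw [restrict_id_append hg (mem_Zset.1 hy).2.1]
    have h5 : g (z.take m) ++ z.drop m = g (z'.take m) ++ z'.drop m := by
      rw [← hexp z hz, ← hexp z' hz', hgz]
    rw [heq.1] at h5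
    have h6 : z.drop m = z'.drop m := List.append_cancel_left h5
    calc z = z.take m ++ z.drop m := (List.take_append_drop _ _).symm
    _ = z'.take m ++ z'.drop m := by rw [heq.1, h6]
    _ = z' := List.take_append_drop _ _

end counting

/-! ### The core limit lemma -/

lemma tendsto_activity_mul {g : List X → List X} (hsub : SubexpActivity g) {K : ℕ} (hK : 0 < K)
    {θ : ℝ≥0∞} (hθ : θ < 1) :
    Filter.Tendsto (fun n : ℕ => (activity g n : ℝ≥0∞) * θ ^ ((n - 1) / K)) atTop (𝓝 0) := by
  by_cases h0 : θ = 0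
  · have hev : (fun n : ℕ => (activity g n : ℝ≥0∞) * θ ^ ((n - 1) / K)) =ᶠ[atTop]
        (fun _ => (0 : ℝ≥0∞)) := by
      filter_upwards [Filter.eventually_ge_atTop (K + 1)] with n hn
      have hm : (n - 1) / K ≠ 0 := by
        have : 1 ≤ (n - 1) / K := (Nat.one_le_div_iff hK).2 (by omega)
        omega
      rw [h0, zero_pow hm, mul_zero]
    rw [Filter.tendsto_congr' hev]
    exact tendsto_const_nhds
  · have hθtop : θ ≠ ⊤ := hθ.ne_top
    set t := θ.toReal with hty
    have ht0 : 0 < t := ENNReal.toReal_pos h0 hθtop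
    have ht1 : t < 1 := by
      have := (ENNReal.toReal_lt_toReal hθtop ENNReal.one_ne_top).2 hθ
      simpa using this
    obtain ⟨c, hc1, hc2⟩ : ∃ c : ℝ, 1 < c ∧ c ^ (2 * K) * t < 1 := by
      have hcont : ContinuousAt (fun c : ℝ => c ^ (2 * K) * t) 1 :=
        ((continuous_pow (2 * K)).mul continuous_const).continuousAt
      have hlt : (fun c : ℝ => c ^ (2 * K) * t) 1 < 1 := by simpa using ht1
      have hev : ∀ᶠ c in 𝓝 (1 : ℝ), c ^ (2 * K) * t < 1 :=
        hcont.eventually_lt continuousAt_const hlt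
      have hev2 : ∀ᶠ c in 𝓝[>] (1 : ℝ), c ^ (2 * K) * t < 1 :=
        hev.filter_mono nhdsWithin_le_nhds
      obtain ⟨c, hcp, hcm⟩ := (hev2.and self_mem_nhdsWithin).exists
      exact ⟨c, hcm, hcp⟩
    have hc0 : (0 : ℝ) ≤ c := le_of_lt (lt_trans zero_lt_one hc1)
    set ρ := c ^ (2 * K) * t with hρ
    have hρ0 : 0 ≤ ρ := mul_nonneg (pow_nonneg hc0 _) ht0.le
    have hdiv : Filter.Tendsto (fun n : ℕ => (n - 1) / K) atTop atTop := by
      apply Filter.tendsto_atTop_atTop.2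
      intro b
      exact ⟨K * b + 1, fun n hn => (Nat.le_div_iff_mul_le hK).2 (by rw [Nat.mul_comm]; omega)⟩
    have hreal : Filter.Tendsto (fun n : ℕ => (activity g n : ℝ) * t ^ ((n - 1) / K))
        atTop (𝓝 0) := by
      apply squeeze_zero' (g := fun n : ℕ => ρ ^ ((n - 1) / K))
      · exact Filter.Eventually.of_forall fun n => by positivity
      · filter_upwards [hsub c hc1, Filter.eventually_ge_atTop (K + 1)] with n hn1 hn2
        set m := (n - 1) / K with hm
        have hdm : K * m + (n - 1) % K = n - 1 := Nat.div_add_mod _ _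
        have hmod : (n - 1) % K < K := Nat.mod_lt _ hK
        have hm1 : 1 ≤ m := (Nat.one_le_div_iff hK).2 (by omega)
        have hnm : n ≤ 2 * K * m := by
          have h2 : 2 * K * m = K * m + K * m := by ring
          have h3 : K ≤ K * m := Nat.le_mul_of_pos_right K (by omega)
          omega
        calc (activity g n : ℝ) * t ^ m ≤ c ^ n * t ^ m :=
            mul_le_mul_of_nonneg_right hn1 (pow_nonneg ht0.le _)
        _ ≤ c ^ (2 * K * m) * t ^ m :=
            mul_le_mul_of_nonneg_right (pow_le_pow_right₀ hc1.le hnm) (pow_nonneg ht0.le _)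
        _ = (c ^ (2 * K)) ^ m * t ^ m := by rw [pow_mul]
        _ = ρ ^ m := by rw [hρ, mul_pow]
      · exact (tendsto_pow_atTop_nhds_zero_of_lt_one hρ0 hc2).comp hdiv
    have hfun : (fun n : ℕ => (activity g n : ℝ≥0∞) * θ ^ ((n - 1) / K)) =
        fun n : ℕ => ENNReal.ofReal ((activity g n : ℝ) * t ^ ((n - 1) / K)) := by
      funext n
      rw [ENNReal.ofReal_mul (by positivity), ENNReal.ofReal_pow ht0.le,
        hty, ENNReal.ofReal_toReal hθtop, ENNReal.ofReal_natCast]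
    rw [hfun]
    have := ENNReal.tendsto_ofReal hreal
    simpa using this

/-! ### Null sets -/

section nullsets
variable [Fintype X] [MeasurableSpace X] [MeasurableSingletonClass X]
variable {g : List X → List X} {l : X → ℝ≥0∞} {L : X → X → ℝ≥0∞} {μ : Measure (ℕ → X)}

lemma measure_le_of_cover (hμ : ∀ w : List X, μ (cylinder w) = cylWeight l L w)
    {K : ℕ} {θ : ℝ≥0∞} (hdecay : ∀ w : List X, cylWeight l L w ≤ θ ^ ((w.length - 1) / K))
    (F : Finset (List X)) {n : ℕ} (hlen : ∀ w ∈ F, w.length = n)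
    {S : Set (ℕ → X)} (hS : S ⊆ ⋃ w ∈ F, cylinder w) :
    μ S ≤ F.card * θ ^ ((n - 1) / K) := by
  calc μ S ≤ μ (⋃ w ∈ F, cylinder w) := measure_mono hS
  _ ≤ ∑ w ∈ F, μ (cylinder w) := measure_biUnion_finset_le _ _
  _ ≤ ∑ _w ∈ F, θ ^ ((n - 1) / K) := by
      apply Finset.sum_le_sum
      intro w hw
      rw [hμ]
      have h2 := hdecay w
      rw [hlen w hw] at h2
      exact h2
  _ = F.card * θ ^ ((n - 1) / K) := by rw [Finset.sum_const, nsmul_eq_mul]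

lemma omega_null [Nonempty X] (hg : IsTreeEndo g) (hsub : SubexpActivity g)
    (hL : ∀ x, ∑ y : X, L x y = 1) (hl1 : ∑ x : X, l x = 1)
    (hstat : ∀ y, ∑ x : X, l x * L x y = l y)
    (hμ : ∀ w : List X, μ (cylinder w) = cylWeight l L w)
    (hna : ∀ ω : ℕ → X, μ {ω} = 0) :
    μ (OmegaSet g) = 0 := by
  obtain ⟨K, hK, θ, hθ, hdecay⟩ := exists_decay hL hl1 hstat μ hμ hna
  have hten := tendsto_activity_mul hsub hK hθ
  refine le_antisymm (ge_of_tendsto hten (Filter.Eventually.of_forall fun n => ?_)) (zero_le)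
  have hcov : OmegaSet g ⊆ ⋃ w ∈ nonV g n, cylinder w := by
    intro ω hω
    exact Set.mem_biUnion (mem_nonV.2 ⟨pre_length ω n, (mem_omega_iff.1 hω) n⟩)
      (mem_cylinder_pre ω n)
  calc μ (OmegaSet g) ≤ (nonV g n).card * θ ^ ((n - 1) / K) :=
      measure_le_of_cover hμ hdecay _ (fun w hw => (mem_nonV.1 hw).1) hcov
  _ ≤ (activity g n : ℝ≥0∞) * θ ^ ((n - 1) / K) :=
      mul_le_mul_left (Nat.cast_le.2 (card_nonV hg n)) _

lemma map_omega_null [Nonempty X] (hg : IsTreeEndo g) (hsub : SubexpActivity g)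
    (hL : ∀ x, ∑ y : X, L x y = 1) (hl1 : ∑ x : X, l x = 1)
    (hstat : ∀ y, ∑ x : X, l x * L x y = l y)
    (hμ : ∀ w : List X, μ (cylinder w) = cylWeight l L w)
    (hna : ∀ ω : ℕ → X, μ {ω} = 0) :
    μ (treeBoundary g ⁻¹' OmegaSet g) = 0 := by
  obtain ⟨K, hK, θ, hθ, hdecay⟩ := exists_decay hL hl1 hstat μ hμ hna
  have hten := tendsto_activity_mul hsub hK hθ
  have hpre : treeBoundary g ⁻¹' OmegaSet g = {ω | ∀ n, g (pre ω n) ∉ Vset g} := by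
    ext ω
    simp only [Set.mem_preimage, Set.mem_setOf_eq]
    rw [mem_omega_iff]
    constructor
    · intro h n
      have := h n
      rwa [treeBoundary_pre hg] at this
    · intro h n
      rw [treeBoundary_pre hg]
      exact h n
  set NoI : Set (ℕ → X) := {ω | ∀ n, restrict g (pre ω n) ≠ id} with hNoIdef
  set Bad : ℕ → Set (ℕ → X) :=
    fun m => {ω | restrict g (pre ω m) = id ∧ ∀ n, g (pre ω n) ∉ Vset g} with hBaddef
  have hsplit : {ω : ℕ → X | ∀ n, g (pre ω n) ∉ Vset g} ⊆ NoI ∪ ⋃ m, Bad m := by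
    intro ω hω
    by_cases h : ∀ n, restrict g (pre ω n) ≠ id
    · exact Or.inl h
    · push_neg at h
      obtain ⟨m, hm⟩ := h
      exact Or.inr (Set.mem_iUnion.2 ⟨m, hm, hω⟩)
  have hNoI : μ NoI = 0 := by
    refine le_antisymm (ge_of_tendsto hten (Filter.Eventually.of_forall fun n => ?_)) (zero_le)
    have hcov : NoI ⊆ ⋃ w ∈ actW g n, cylinder w := by
      intro ω hω
      exact Set.mem_biUnion (mem_actW.2 ⟨pre_length ω n, hω n⟩) (mem_cylinder_pre ω n)
    calc μ NoI ≤ (actW g n).card * θ ^ ((n - 1) / K) :=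
        measure_le_of_cover hμ hdecay _ (fun w hw => (mem_actW.1 hw).1) hcov
    _ = (activity g n : ℝ≥0∞) * θ ^ ((n - 1) / K) := by rw [card_actW]
  have hBad : ∀ m, μ (Bad m) = 0 := by
    intro m
    have haux : Filter.Tendsto (fun k : ℕ => m + k) atTop atTop :=
      Filter.tendsto_atTop_atTop.2 fun b => ⟨b, fun n hn => by omega⟩
    have h1 : Filter.Tendsto
        (fun k => (activity g (m + k) : ℝ≥0∞) * θ ^ ((m + k - 1) / K)) atTop (𝓝 0) :=
      hten.comp haux
    have hten2 : Filter.Tendsto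
        (fun k => ((words (X := X) m).card : ℝ≥0∞) *
          ((activity g (m + k) : ℝ≥0∞) * θ ^ ((m + k - 1) / K))) atTop (𝓝 0) := by
      have h2 := ENNReal.Tendsto.const_mul (a := ((words (X := X) m).card : ℝ≥0∞)) h1
        (Or.inr (ENNReal.natCast_ne_top _))
      simpa using h2
    refine le_antisymm (ge_of_tendsto hten2 (Filter.Eventually.of_forall fun k => ?_))
      (zero_le)
    have hcov : Bad m ⊆ ⋃ z ∈ Zset g m k, cylinder z := by
      intro ω hω
      refine Set.mem_biUnion (mem_Zset.2 ⟨pre_length ω (m + k), ?_, hω.2 (m + k)⟩)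
        (mem_cylinder_pre ω (m + k))
      rw [pre_take ω (by omega : m ≤ m + k)]
      exact hω.1
    calc μ (Bad m) ≤ (Zset g m k).card * θ ^ ((m + k - 1) / K) :=
        measure_le_of_cover hμ hdecay _ (fun w hw => (mem_Zset.1 hw).1) hcov
    _ ≤ ((words (X := X) m).card * (activity g (m + k)) : ℕ) * θ ^ ((m + k - 1) / K) :=
        mul_le_mul_left (Nat.cast_le.2 (card_Zset hg m k)) _
    _ = ((words (X := X) m).card : ℝ≥0∞) *
          ((activity g (m + k) : ℝ≥0∞) * θ ^ ((m + k - 1) / K)) := by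
        rw [Nat.cast_mul, mul_assoc]
  rw [hpre]
  apply measure_mono_null hsplit
  exact measure_union_null hNoI (measure_iUnion_null hBad)

end nullsets

/-! ### Generation of the product σ-algebra by cylinders -/

section gen
variable [Fintype X] [MeasurableSpace X] [MeasurableSingletonClass X]

lemma coord_mem_generateFrom (i : ℕ) (x : X) :
    MeasurableSet[MeasurableSpace.generateFrom
      {s : Set (ℕ → X) | ∃ w : List X, s = cylinder w}] {ω : ℕ → X | ω i = x} := by
  have hset : {ω : ℕ → X | ω i = x} =
      ⋃ f : Fin (i + 1) → X, ⋃ _h : f ⟨i, Nat.lt_succ_self i⟩ = x,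
        cylinder (List.ofFn f) := by
    ext ω
    simp only [Set.mem_setOf_eq, Set.mem_iUnion]
    constructor
    · intro h
      refine ⟨fun j => ω j, h, ?_⟩
      have : List.ofFn (fun j : Fin (i + 1) => ω (j : ℕ)) = pre ω (i + 1) := rfl
      rw [this]
      exact mem_cylinder_pre ω (i + 1)
    · rintro ⟨f, hf, hmem⟩
      rw [mem_cylinder_iff] at hmem
      have hlen : (List.ofFn f).length = i + 1 := by simp
      have h2 : (pre ω (List.ofFn f).length)[i]'(by simp [hlen]) =
          (List.ofFn f)[i]'(by simp [hlen]) := List.getElem_of_eq hmem _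
      rw [pre_getElem] at h2
      rw [List.getElem_ofFn] at h2
      rw [h2]
      convert hf
  rw [hset]
  refine MeasurableSet.iUnion fun f => MeasurableSet.iUnion fun _ => ?_
  exact MeasurableSpace.measurableSet_generateFrom ⟨_, rfl⟩

lemma generateFrom_cylinders :
    (inferInstance : MeasurableSpace (ℕ → X)) =
      MeasurableSpace.generateFrom {s : Set (ℕ → X) | ∃ w : List X, s = cylinder w} := by
  apply le_antisymm
  · have h1 : @Measurable (ℕ → X) (ℕ → X)
        (MeasurableSpace.generateFrom {s : Set (ℕ → X) | ∃ w : List X, s = cylinder w})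
        MeasurableSpace.pi id :=
      (@measurable_pi_iff (ℕ → X) ℕ (fun _ => X)
        (MeasurableSpace.generateFrom {s : Set (ℕ → X) | ∃ w : List X, s = cylinder w})
        (fun _ => inferInstance) id).2 (fun i => by
          intro s _hs
          have hs2 : ((fun ω : ℕ → X => (id ω) i) ⁻¹' s) = ⋃ x ∈ s, {ω : ℕ → X | ω i = x} := by
            ext ω; simp
          rw [hs2]
          exact MeasurableSet.biUnion (Set.to_countable s)
            fun x _ => coord_mem_generateFrom i x)
    intro s hs
    exact h1 hs
  · exact MeasurableSpace.generateFrom_le (by rintro t ⟨w, rfl⟩; exact measurableSet_cylinder w)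

lemma isPiSystem_cylinders :
    IsPiSystem {s : Set (ℕ → X) | ∃ w : List X, s = cylinder w} := by
  rintro s ⟨u, rfl⟩ t ⟨v, rfl⟩ hne
  rcases prefix_or_disjoint u v with h | h | h
  · rw [cylinder_inter_of_prefix h]; exact ⟨v, rfl⟩
  · rw [Set.inter_comm, cylinder_inter_of_prefix h]; exact ⟨u, rfl⟩
  · rw [Set.disjoint_iff_inter_eq_empty] at h
    rw [h] at hne
    simp at hne

end gen

/-! ### Partition of a measure along `Vmax` cylinders -/

section partition
variable [Fintype X] [MeasurableSpace X] [MeasurableSingletonClass X]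

lemma F_measurable (g : List X → List X) (p : List X × X) :
    MeasurableSet {ω : ℕ → X | p.1 ∈ Vmax g ∧ ω ∈ cylinder (p.1 ++ [p.2])} := by
  by_cases h : p.1 ∈ Vmax g
  · have : {ω : ℕ → X | p.1 ∈ Vmax g ∧ ω ∈ cylinder (p.1 ++ [p.2])} =
        cylinder (p.1 ++ [p.2]) := by
      ext ω; simp [h]
    rw [this]; exact measurableSet_cylinder _
  · have : {ω : ℕ → X | p.1 ∈ Vmax g ∧ ω ∈ cylinder (p.1 ++ [p.2])} = ∅ := by
      ext ω; simp [h]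
    rw [this]; exact MeasurableSet.empty

lemma F_disjoint (g : List X → List X) :
    Pairwise (Function.onFun Disjoint
      (fun p : List X × X => {ω : ℕ → X | p.1 ∈ Vmax g ∧ ω ∈ cylinder (p.1 ++ [p.2])})) := by
  rintro ⟨w, x⟩ ⟨w', x'⟩ hne
  have hsub : ∀ (q : List X × X), {ω : ℕ → X | q.1 ∈ Vmax g ∧ ω ∈ cylinder (q.1 ++ [q.2])} ⊆
      cylinder (q.1 ++ [q.2]) := fun q ω hω => hω.2
  by_cases hw : w ∈ Vmax g
  · by_cases hw' : w' ∈ Vmax g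
    · by_cases hww' : w = w'
      · subst hww'
        have hxx' : x ≠ x' := by
          intro h; exact hne (by rw [h])
        refine Disjoint.mono (hsub (w, x)) (hsub (w, x')) ?_
        apply disjoint_cylinder_of_ne (by simp)
        intro h
        exact hxx' (by simpa using List.append_cancel_left h)
      · refine Disjoint.mono (hsub (w, x)) (hsub (w', x')) ?_
        exact Disjoint.mono (cylinder_subset_of_prefix ⟨[x], rfl⟩)
          (cylinder_subset_of_prefix ⟨[x'], rfl⟩) (vmax_disjoint hw hw' hww')
    · apply Disjoint.mono_right (show _ ⊆ (∅ : Set (ℕ → X)) from fun ω hω => hw' hω.1)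
      simp
  · apply Disjoint.mono_left (show _ ⊆ (∅ : Set (ℕ → X)) from fun ω hω => hw hω.1)
    simp

lemma compl_omega_eq (g : List X → List X) :
    (OmegaSet g)ᶜ =
      ⋃ p : List X × X, {ω : ℕ → X | p.1 ∈ Vmax g ∧ ω ∈ cylinder (p.1 ++ [p.2])} := by
  ext ω
  rw [OmegaSet, compl_compl]
  simp only [Set.mem_iUnion, Set.mem_setOf_eq]
  constructor
  · rintro ⟨w, hw, hmem⟩
    refine ⟨(w, ω w.length), hw, ?_⟩
    rw [mem_cylinder_iff] at hmem ⊢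
    show pre ω (w ++ [ω w.length]).length = _
    rw [List.length_append, List.length_singleton, pre_succ, hmem]
  · rintro ⟨⟨w, x⟩, hw, hmem⟩
    exact ⟨w, hw, cylinder_subset_of_prefix ⟨[x], rfl⟩ hmem⟩

lemma measure_eq_tsum_parts (g : List X → List X) (μ' : Measure (ℕ → X))
    (hΩ : μ' (OmegaSet g) = 0) {E : Set (ℕ → X)} (hE : MeasurableSet E) :
    μ' E = ∑' w : List X, ∑' x : X,
      μ' (E ∩ {ω : ℕ → X | w ∈ Vmax g ∧ ω ∈ cylinder (w ++ [x])}) := by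
  have h0 : μ' (E ∩ OmegaSet g) = 0 := measure_mono_null Set.inter_subset_right hΩ
  have h1 : μ' E = μ' (E ∩ (OmegaSet g)ᶜ) := by
    have hsplit : E = (E ∩ (OmegaSet g)ᶜ) ∪ (E ∩ OmegaSet g) := by
      rw [← Set.inter_union_distrib_left, Set.compl_union_self, Set.inter_univ]
    apply le_antisymm
    · calc μ' E ≤ μ' (E ∩ (OmegaSet g)ᶜ) + μ' (E ∩ OmegaSet g) := by
            conv_lhs => rw [hsplit]
            exact measure_union_le _ _
      _ = μ' (E ∩ (OmegaSet g)ᶜ) := by rw [h0, add_zero]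
    · exact measure_mono Set.inter_subset_left
  rw [h1, compl_omega_eq, Set.inter_iUnion]
  rw [measure_iUnion (fun p q hpq => Disjoint.mono Set.inter_subset_right
      Set.inter_subset_right (F_disjoint g hpq))
    (fun p => hE.inter (F_measurable g p))]
  rw [← ENNReal.tsum_prod]

end partition

/-! ### The local Markov identity -/

lemma measure_preimage_concat [Fintype X] [MeasurableSpace X] [MeasurableSingletonClass X]
    {g : List X → List X} (hg : IsTreeEndo g) {l : X → ℝ≥0∞} {L : X → X → ℝ≥0∞}
    {μ : Measure (ℕ → X)} (hμ : ∀ w : List X, μ (cylinder w) = cylWeight l L w)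
    {w : List X} (hw : w ∈ Vset g) (x : X) (v : List X) :
    μ (treeBoundary g ⁻¹' cylinder (w ++ [x] ++ v)) =
      μ (treeBoundary g ⁻¹' cylinder (w ++ [x])) * chainWeight L x v := by
  classical
  have h1 := preims_concat hg hw x v
  have h2 := preims_concat hg hw x []
  simp only [List.append_nil] at h2
  rw [measure_preimage_cylinder hg hμ, measure_preimage_cylinder hg hμ, h1, h2,
    Finset.sum_map, Finset.sum_map]
  simp only [Function.Embedding.coeFn_mk]
  rw [Finset.sum_mul]
  exact Finset.sum_congr rfl fun u _ => cylWeight_concat_append l L u x v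

/-! ### Evaluating the density measure -/

open scoped Classical in
lemma withDensity_apply_parts [Fintype X] [MeasurableSpace X] [MeasurableSingletonClass X]
    (μ : Measure (ℕ → X)) (gb : (ℕ → X) → ℕ → X) (g : List X → List X)
    {E : Set (ℕ → X)} (hE : MeasurableSet E) :
    μ.withDensity (rnDensity μ gb g) E = ∑' w : List X, ∑' x : X,
      (if w ∈ Vmax g ∧ μ (cylinder (w ++ [x])) ≠ 0
        then μ (gb ⁻¹' cylinder (w ++ [x])) / μ (cylinder (w ++ [x])) *
          μ (cylinder (w ++ [x]) ∩ E) else 0) := by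
  classical
  have hDset : ∀ (w : List X) (x : X),
      {ω' : ℕ → X | w ∈ Vmax g ∧ μ (cylinder (w ++ [x])) ≠ 0 ∧ ω' ∈ cylinder (w ++ [x])} =
        if w ∈ Vmax g ∧ μ (cylinder (w ++ [x])) ≠ 0 then cylinder (w ++ [x]) else ∅ := by
    intro w x
    by_cases h : w ∈ Vmax g ∧ μ (cylinder (w ++ [x])) ≠ 0
    · rw [if_pos h]; ext ω; simp [h.1, h.2]
    · rw [if_neg h]; ext ω
      simp only [Set.mem_setOf_eq, Set.mem_empty_iff_false, iff_false]
      intro hcon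
      exact h ⟨hcon.1, hcon.2.1⟩
  have hDmeas : ∀ (w : List X) (x : X), MeasurableSet
      {ω' : ℕ → X | w ∈ Vmax g ∧ μ (cylinder (w ++ [x])) ≠ 0 ∧ ω' ∈ cylinder (w ++ [x])} := by
    intro w x
    rw [hDset]
    split
    · exact measurableSet_cylinder _
    · exact MeasurableSet.empty
  rw [MeasureTheory.withDensity_apply _ hE]
  unfold rnDensity
  rw [MeasureTheory.lintegral_tsum (fun w => (Measurable.ennreal_tsum (fun x =>
    Measurable.indicator measurable_const (hDmeas w x))).aemeasurable)]
  apply tsum_congr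
  intro w
  rw [MeasureTheory.lintegral_tsum (fun x =>
    (Measurable.indicator measurable_const (hDmeas w x)).aemeasurable)]
  apply tsum_congr
  intro x
  rw [MeasureTheory.lintegral_indicator (hDmeas w x), MeasureTheory.setLIntegral_const,
    MeasureTheory.Measure.restrict_apply (hDmeas w x), hDset]
  split
  case isTrue h => rfl
  case isFalse h => rw [Set.empty_inter, measure_empty, mul_zero]


theorem stmt2 [Fintype X] [Nontrivial X] [MeasurableSpace X] [MeasurableSingletonClass X]
    (g : List X → List X) (hg : IsTreeEndo g) (hsub : SubexpActivity g)
    (L : X → X → ℝ≥0∞) (l : X → ℝ≥0∞)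
    (hL : ∀ x, ∑ y : X, L x y = 1) (hl1 : ∑ x : X, l x = 1)
    (hstat : ∀ y, ∑ x : X, l x * L x y = l y)
    (μ : Measure (ℕ → X)) (hμ : ∀ w : List X, μ (cylinder w) = cylWeight l L w)
    (hna : ∀ ω : ℕ → X, μ {ω} = 0)
    (hmeas : Measurable (treeBoundary g)) :
    ((Measure.map (treeBoundary g) μ ≪ μ) ↔
      ∀ w ∈ Vmax g, ∀ x : X, μ (cylinder (w ++ [x])) = 0 →
        μ (treeBoundary g ⁻¹' cylinder (w ++ [x])) = 0) ∧
    ((∀ w ∈ Vmax g, ∀ x : X, μ (cylinder (w ++ [x])) = 0 →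
        μ (treeBoundary g ⁻¹' cylinder (w ++ [x])) = 0) →
      Measure.map (treeBoundary g) μ = μ.withDensity (rnDensity μ (treeBoundary g) g)) := by
  classical
  have hprob : IsProbabilityMeasure μ := ⟨by rw [← cylinder_nil (X := X), hμ]; rfl⟩
  have hmapcyl : ∀ z : List X, Measure.map (treeBoundary g) μ (cylinder z) =
      μ (treeBoundary g ⁻¹' cylinder z) :=
    fun z => Measure.map_apply hmeas (measurableSet_cylinder z)
  have hmapΩ : Measure.map (treeBoundary g) μ (OmegaSet g) = 0 := by
    rw [Measure.map_apply hmeas (measurableSet_omega g)]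
    exact map_omega_null hg hsub hL hl1 hstat hμ hna
  have hfwd : (Measure.map (treeBoundary g) μ ≪ μ) →
      ∀ w ∈ Vmax g, ∀ x : X, μ (cylinder (w ++ [x])) = 0 →
        μ (treeBoundary g ⁻¹' cylinder (w ++ [x])) = 0 := by
    intro hac w hw x h0
    have h1 := hac h0
    rwa [hmapcyl] at h1
  have hmain : (∀ w ∈ Vmax g, ∀ x : X, μ (cylinder (w ++ [x])) = 0 →
      μ (treeBoundary g ⁻¹' cylinder (w ++ [x])) = 0) →
      Measure.map (treeBoundary g) μ = μ.withDensity (rnDensity μ (treeBoundary g) g) := by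
    intro hcond
    have hterm : ∀ (v w : List X) (x : X),
        Measure.map (treeBoundary g) μ
            (cylinder v ∩ {ω : ℕ → X | w ∈ Vmax g ∧ ω ∈ cylinder (w ++ [x])}) =
          (if w ∈ Vmax g ∧ μ (cylinder (w ++ [x])) ≠ 0
            then μ (treeBoundary g ⁻¹' cylinder (w ++ [x])) / μ (cylinder (w ++ [x])) *
              μ (cylinder (w ++ [x]) ∩ cylinder v) else 0) := by
      intro v w x
      by_cases hw : w ∈ Vmax g
      case neg =>
        have hset : cylinder v ∩ {ω : ℕ → X | w ∈ Vmax g ∧ ω ∈ cylinder (w ++ [x])} =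
            (∅ : Set (ℕ → X)) := by
          ext ω; simp [hw]
        rw [hset, if_neg (fun hcon => hw hcon.1), measure_empty]
      case pos =>
      have hset : cylinder v ∩ {ω : ℕ → X | w ∈ Vmax g ∧ ω ∈ cylinder (w ++ [x])} =
          cylinder v ∩ cylinder (w ++ [x]) := by
        ext ω; simp [hw]
      rw [hset]
      by_cases h0 : μ (cylinder (w ++ [x])) = 0
      · rw [if_neg (fun hcon => hcon.2 h0)]
        apply measure_mono_null (Set.inter_subset_right)
        rw [hmapcyl]
        exact hcond w hw x h0
      · rw [if_pos ⟨hw, h0⟩]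
        have htop : μ (cylinder (w ++ [x])) ≠ ⊤ := by
          rw [hμ]
          exact ((cylWeight_le_one hL hl1 _).trans_lt ENNReal.one_lt_top).ne
        rcases prefix_or_disjoint v (w ++ [x]) with hp | hp | hp
        · rw [cylinder_inter_of_prefix hp, Set.inter_comm (cylinder (w ++ [x])) (cylinder v),
            cylinder_inter_of_prefix hp, hmapcyl, ENNReal.div_mul_cancel h0 htop]
        · obtain ⟨v', rfl⟩ := hp
          rw [Set.inter_comm (cylinder (w ++ [x] ++ v')) (cylinder (w ++ [x])),
            cylinder_inter_of_prefix (⟨v', rfl⟩ : w ++ [x] <+: w ++ [x] ++ v'),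
            hmapcyl, measure_preimage_concat hg hμ hw.1 x v',
            hμ (w ++ [x] ++ v'), cylWeight_concat_append, ← hμ (w ++ [x]), ← mul_assoc,
            ENNReal.div_mul_cancel h0 htop]
        · rw [Set.disjoint_iff_inter_eq_empty] at hp
          rw [hp, measure_empty, Set.inter_comm (cylinder (w ++ [x])) (cylinder v), hp,
            measure_empty, mul_zero]
    haveI : IsProbabilityMeasure (Measure.map (treeBoundary g) μ) :=
      Measure.isProbabilityMeasure_map hmeas.aemeasurable
    have hkey : ∀ v : List X, Measure.map (treeBoundary g) μ (cylinder v) =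
        μ.withDensity (rnDensity μ (treeBoundary g) g) (cylinder v) := by
      intro v
      rw [measure_eq_tsum_parts g _ hmapΩ (measurableSet_cylinder v),
        withDensity_apply_parts μ (treeBoundary g) g (measurableSet_cylinder v)]
      exact tsum_congr fun w => tsum_congr fun x => hterm v w x
    apply MeasureTheory.ext_of_generate_finite _ (generateFrom_cylinders (X := X))
      isPiSystem_cylinders
    · rintro s ⟨z, rfl⟩
      exact hkey z
    · rw [← cylinder_nil (X := X)]
      exact hkey []
  refine ⟨⟨hfwd, fun h => ?_⟩, hmain⟩
  rw [hmain h]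
  exact MeasureTheory.withDensity_absolutelyContinuous μ _


end AutoMarkov
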